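/- arXiv:2002.09385 — 5 statements merged into one kernel-verified Lean document; each statement's English description precedes it below -/
import Mathlib

section
/- For positive reals x ≠ y, the limit of S_{α,β}(x,y) as (α,β) → (0,1) (i.e., the Stolarsky mean S_{0,1}) equals the logarithmic mean (x - y)/(log x - log y). -/
/-!
`S_{α,1}(x,y) = ((x^α - y^α)/α / (x - y))^(1/(α-1))`. The inner quotient is the difference
quotient at `0` of `α ↦ x^α - y^α`, whose derivative there is `log x - log y`; the exponent tends
to `-1`, and since the limit of the base is nonzero, `rpow` is jointly continuous there.
-/

open Filter

/-- The weighted Stolarsky mean. -/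
noncomputable def stolarsky (α β x y : ℝ) : ℝ :=
  ((β * (x ^ α - y ^ α)) / (α * (x ^ β - y ^ β))) ^ (1 / (α - β))

open Real

open scoped Topology

theorem hasDerivAt_rpow_sub_rpow_zero {x y : ℝ} (hx : 0 < x) (hy : 0 < y) :
    HasDerivAt (fun α : ℝ => x ^ α - y ^ α) (log x - log y) 0 :=
  ((hasStrictDerivAt_const_rpow hx 0).hasDerivAt.sub
    (hasStrictDerivAt_const_rpow hy 0).hasDerivAt).congr_deriv (by simp)

theorem tendsto_rpow_sub_rpow_div_nhdsNE_zero {x y : ℝ} (hx : 0 < x) (hy : 0 < y) :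
    Tendsto (fun α : ℝ => (x ^ α - y ^ α) / α) (𝓝[≠] 0) (𝓝 (log x - log y)) := by
  have hslope := hasDerivAt_iff_tendsto_slope.mp (hasDerivAt_rpow_sub_rpow_zero hx hy)
  refine hslope.congr fun α => ?_
  simp [slope_def_field]

theorem stolarsky_one (α x y : ℝ) :
    stolarsky α 1 x y = ((x ^ α - y ^ α) / α / (x - y)) ^ (1 / (α - 1)) := by
  simp only [stolarsky, one_mul, rpow_one, div_div]

theorem log_sub_log_ne_zero {x y : ℝ} (hx : 0 < x) (hy : 0 < y) (hxy : x ≠ y) :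
    log x - log y ≠ 0 :=
  sub_ne_zero.mpr fun h => hxy (log_injOn_pos hx hy h)

/-- The Stolarsky mean `S_{0,1}`, i.e. the limit of `S_{α,1}` as `α → 0`,
equals the logarithmic mean `(x - y)/(log x - log y)`. -/
theorem stolarsky_zero_one_eq_logMean (x y : ℝ) (hx : 0 < x) (hy : 0 < y) (hxy : x ≠ y) :
    Tendsto (fun α => stolarsky α 1 x y) (nhdsWithin 0 {(0 : ℝ)}ᶜ)
      (nhds ((x - y) / (Real.log x - Real.log y))) := by
  have hbase : Tendsto (fun α : ℝ => (x ^ α - y ^ α) / α / (x - y)) (𝓝[≠] 0)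
      (𝓝 ((log x - log y) / (x - y))) :=
    (tendsto_rpow_sub_rpow_div_nhdsNE_zero hx hy).div_const _
  have hexp : Tendsto (fun α : ℝ => 1 / (α - 1)) (𝓝[≠] 0) (𝓝 (-1)) := by
    have hcont : ContinuousAt (fun α : ℝ => 1 / (α - 1)) 0 :=
      continuousAt_const.div (by fun_prop) (by norm_num)
    simpa using hcont.tendsto.mono_left nhdsWithin_le_nhds
  have hlim := hbase.rpow hexp
    (Or.inl (div_ne_zero (log_sub_log_ne_zero hx hy hxy) (sub_ne_zero.mpr hxy)))
  simpa only [stolarsky_one, rpow_neg_one, inv_div] using hlim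
end

section
/- For the weighted Stolarsky mean S_{α,β} with α > β, αβ ≠ 0, the second derivative on the diagonal satisfies ∂ₓ²S_{α,β}(x,x) = (α + β - 3)/(12x) for all x > 0. -/
/-!
Writing `t = x e^v`, homogeneity gives `S(t, x) = x exp ℓ(v)` with
`ℓ(v) = (log E(αv) - log E(βv)) / (α - β)`, where `E(z) = (e^z - 1)/z = dslope exp 0 z`
is analytic and positive. Differentiating `e^z - 1 = z E(z)` gives `E⁽ⁿ⁾(0) = 1/(n+1)`,
so `log E` has derivatives `1/2` and `1/12` at `0`, whence `ℓ'(0) = 1/2` and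
`ℓ''(0) = (α + β)/12`. The chain rule in `v = log t - log x` then gives
`∂ₜ²S(x, x) = (ℓ''(0) + ℓ'(0)² - ℓ'(0))/x`.
-/

open Real Topology

/-- The weighted Stolarsky mean, extended continuously to the diagonal. -/
noncomputable def stolarskyExt (α β x y : ℝ) : ℝ :=
  if x = y then x
  else ((β * (x ^ α - y ^ α)) / (α * (x ^ β - y ^ β))) ^ (1 / (α - β))

theorem AnalyticAt.dslope {𝕜 E : Type*} [NontriviallyNormedField 𝕜] [NormedAddCommGroup E]
    [NormedSpace 𝕜 E] {f : 𝕜 → E} {a b : 𝕜} (ha : AnalyticAt 𝕜 f a) (hb : AnalyticAt 𝕜 f b) :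
    AnalyticAt 𝕜 (dslope f a) b := by
  rcases eq_or_ne b a with rfl | hba
  · obtain ⟨p, hp⟩ := ha
    exact hp.has_fpower_series_dslope_fslope.analyticAt
  · refine AnalyticAt.congr ?_ (dslope_eventuallyEq_slope_of_ne f hba).symm
    have : AnalyticAt 𝕜 (fun z => (z - a)⁻¹ • (f z - f a)) b :=
      ((analyticAt_id.sub analyticAt_const).inv (sub_ne_zero.2 hba)).smul
        (hb.sub analyticAt_const)
    simpa [slope_fun_def] using this

theorem iteratedDeriv_dslope_zero {𝕜 : Type*} [NontriviallyNormedField 𝕜] [CharZero 𝕜]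
    [CompleteSpace 𝕜] {f : 𝕜 → 𝕜} (hf : AnalyticAt 𝕜 f 0) (n : ℕ) :
    iteratedDeriv n (dslope f 0) 0 = iteratedDeriv (n + 1) f 0 / (n + 1) := by
  have leibniz : iteratedDeriv (n + 1) (fun z => z * dslope f 0 z) 0 =
      (n + 1) * iteratedDeriv n (dslope f 0) 0 := by
    rw [iteratedDeriv_fun_mul (f := fun z => z) contDiffAt_id (hf.dslope hf).contDiffAt,
      Finset.sum_eq_single 1 (fun i _ hi => by simp [iteratedDeriv_fun_id_zero, hi]) (by simp)]
    simp
  have factor : (fun z => z * dslope f 0 z) = fun z => f z - f 0 := by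
    funext z
    simpa using sub_smul_dslope f 0 z
  rw [eq_div_iff (by norm_cast), mul_comm, ← leibniz, factor, iteratedDeriv_succ',
    iteratedDeriv_succ']
  congr 1
  funext z
  exact deriv_sub_const (f 0)

theorem contDiff_dslope_exp {n : WithTop ℕ∞} : ContDiff ℝ n (dslope exp 0) :=
  AnalyticOnNhd.contDiff fun _ _ => analyticAt_rexp.dslope analyticAt_rexp

theorem dslope_exp_pos (z : ℝ) : 0 < dslope exp 0 z := by
  rcases eq_or_ne z 0 with rfl | hz
  · simp
  rw [dslope_of_ne _ hz, slope_def_field, exp_zero, sub_zero]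
  rcases hz.lt_or_gt with hneg | hpos
  · exact div_pos_of_neg_of_neg (by linarith [exp_lt_one_iff.2 hneg]) hneg
  · exact div_pos (by linarith [one_lt_exp_iff.2 hpos]) hpos

theorem iteratedDeriv_dslope_exp_zero (n : ℕ) :
    iteratedDeriv n (dslope exp 0) 0 = 1 / (n + 1) := by
  rw [iteratedDeriv_dslope_zero analyticAt_rexp, iteratedDeriv_eq_iterate, iter_deriv_exp,
    exp_zero]

theorem iteratedDeriv_two_log (x : ℝ) : iteratedDeriv 2 log x = -(x ^ 2)⁻¹ := by
  rw [iteratedDeriv_succ, iteratedDeriv_one, deriv_log', deriv_inv]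

theorem deriv_log_dslope_exp_zero : deriv (fun z => log (dslope exp 0 z)) 0 = 1 / 2 := by
  rw [deriv.log ((contDiff_dslope_exp (n := 1)).differentiable one_ne_zero 0)
    (dslope_exp_pos 0).ne', ← iteratedDeriv_one, iteratedDeriv_dslope_exp_zero,
    ← iteratedDeriv_zero (f := dslope exp 0), iteratedDeriv_dslope_exp_zero]
  norm_num

theorem iteratedDeriv_two_log_dslope_exp_zero :
    iteratedDeriv 2 (fun z => log (dslope exp 0 z)) 0 = 1 / 12 := by
  have h0 : dslope exp 0 0 = 1 := by simp
  have := iteratedDeriv_comp_two (g := log) (f := dslope exp 0) (x := 0)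
    (by rw [h0]; exact contDiffAt_log.2 one_ne_zero) contDiff_dslope_exp.contDiffAt
  rw [Function.comp_def] at this
  rw [this, h0, iteratedDeriv_two_log, deriv_log, ← iteratedDeriv_one,
    iteratedDeriv_dslope_exp_zero, iteratedDeriv_dslope_exp_zero]
  norm_num

noncomputable def stolarskyLogProfile (α β v : ℝ) : ℝ :=
  1 / (α - β) * (log (dslope exp 0 (α * v)) - log (dslope exp 0 (β * v)))

theorem contDiff_log_dslope_exp {n : WithTop ℕ∞} :
    ContDiff ℝ n (fun z => log (dslope exp 0 z)) :=
  contDiff_dslope_exp.log fun z => (dslope_exp_pos z).ne'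

theorem contDiff_stolarskyLogProfile {n : WithTop ℕ∞} (α β : ℝ) :
    ContDiff ℝ n (stolarskyLogProfile α β) := by
  unfold stolarskyLogProfile
  have h := contDiff_log_dslope_exp (n := n)
  exact contDiff_const.mul ((h.comp (contDiff_const.mul contDiff_id)).sub
    (h.comp (contDiff_const.mul contDiff_id)))

theorem stolarskyLogProfile_zero (α β : ℝ) : stolarskyLogProfile α β 0 = 0 := by
  simp [stolarskyLogProfile]

theorem iteratedDeriv_stolarskyLogProfile_zero (α β : ℝ) (n : ℕ) :
    iteratedDeriv n (stolarskyLogProfile α β) 0 =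
      (α ^ n - β ^ n) / (α - β) * iteratedDeriv n (fun z => log (dslope exp 0 z)) 0 := by
  have h := contDiff_log_dslope_exp (n := n)
  have hscale (c : ℝ) : ContDiffAt ℝ n (fun v => log (dslope exp 0 (c * v))) 0 :=
    (h.comp (contDiff_const.mul contDiff_id)).contDiffAt
  unfold stolarskyLogProfile
  rw [iteratedDeriv_const_mul_field, iteratedDeriv_fun_sub (hscale α) (hscale β),
    iteratedDeriv_comp_const_mul h, iteratedDeriv_comp_const_mul h]
  simp only [mul_zero]
  ring

theorem deriv_stolarskyLogProfile_zero {α β : ℝ} (hαβ : α ≠ β) :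
    deriv (stolarskyLogProfile α β) 0 = 1 / 2 := by
  rw [← iteratedDeriv_one, iteratedDeriv_stolarskyLogProfile_zero, iteratedDeriv_one,
    deriv_log_dslope_exp_zero, pow_one, pow_one, div_self (sub_ne_zero.2 hαβ), one_mul]

theorem iteratedDeriv_two_stolarskyLogProfile_zero {α β : ℝ} (hαβ : α ≠ β) :
    iteratedDeriv 2 (stolarskyLogProfile α β) 0 = (α + β) / 12 := by
  rw [iteratedDeriv_stolarskyLogProfile_zero, iteratedDeriv_two_log_dslope_exp_zero]
  have : α - β ≠ 0 := sub_ne_zero.2 hαβ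
  field_simp
  ring

theorem rpow_sub_rpow_eq_mul_dslope_exp {x t : ℝ} (hx : 0 < x) (ht : 0 < t) (γ : ℝ) :
    t ^ γ - x ^ γ = x ^ γ * (γ * (log t - log x) * dslope exp 0 (γ * (log t - log x))) := by
  have := sub_smul_dslope exp 0 (γ * (log t - log x))
  rw [smul_eq_mul, sub_zero, exp_zero] at this
  rw [this, rpow_def_of_pos ht, rpow_def_of_pos hx, mul_sub, mul_one, ← exp_add]
  ring_nf

theorem stolarskyExt_eq_mul_exp_stolarskyLogProfile {α β x t : ℝ} (hα : α ≠ 0) (hβ : β ≠ 0)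
    (hαβ : α ≠ β) (hx : 0 < x) (ht : 0 < t) :
    stolarskyExt α β t x = x * exp (stolarskyLogProfile α β (log t - log x)) := by
  rcases eq_or_ne t x with rfl | htx
  · simp [stolarskyExt, stolarskyLogProfile]
  have hv : log t - log x ≠ 0 := sub_ne_zero.2 fun h => htx (log_injOn_pos ht hx h)
  have hA := dslope_exp_pos (α * (log t - log x))
  have hB := dslope_exp_pos (β * (log t - log x))
  have hαβ' : α - β ≠ 0 := sub_ne_zero.2 hαβ
  have ratio : β * (t ^ α - x ^ α) / (α * (t ^ β - x ^ β)) =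
      x ^ (α - β) *
        (dslope exp 0 (α * (log t - log x)) / dslope exp 0 (β * (log t - log x))) := by
    rw [rpow_sub_rpow_eq_mul_dslope_exp hx ht, rpow_sub_rpow_eq_mul_dslope_exp hx ht,
      rpow_sub hx]
    field_simp
  rw [stolarskyExt, if_neg htx, ratio, mul_rpow (rpow_pos_of_pos hx _).le (div_pos hA hB).le,
    ← rpow_mul hx.le, mul_one_div_cancel hαβ', rpow_one, rpow_def_of_pos (div_pos hA hB),
    log_div hA.ne' hB.ne', stolarskyLogProfile, mul_comm (1 / (α - β))]

theorem iteratedDeriv_two_comp_log_sub_log {h : ℝ → ℝ} {x : ℝ} (hx : 0 < x)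
    (hh : ContDiffAt ℝ 2 h 0) :
    iteratedDeriv 2 (fun t => h (log t - log x)) x =
      (iteratedDeriv 2 h 0 - deriv h 0) / x ^ 2 := by
  have hlog : ContDiffAt ℝ 2 (fun t => log t - log x) x :=
    (contDiffAt_log.2 hx.ne').sub contDiffAt_const
  have hlog2 : iteratedDeriv 2 (fun t => log t - log x) x = -(x ^ 2)⁻¹ := by
    have hshift : deriv (fun t => log t - log x) = deriv log :=
      funext fun _ => deriv_sub_const _
    rw [iteratedDeriv_succ, iteratedDeriv_one, hshift, deriv_log', deriv_inv]
  have := iteratedDeriv_comp_two (g := h) (by rwa [sub_self]) hlog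
  rw [Function.comp_def] at this
  rw [this, hlog2, sub_self, deriv_sub_const, deriv_log]
  field_simp
  ring

/-- The second derivative of the weighted Stolarsky mean in its first argument on the
diagonal equals `(α + β - 3)/(12 x)`. -/
theorem stolarsky_second_deriv_diagonal (α β : ℝ) (hαβ : β < α) (hα : α ≠ 0) (hβ : β ≠ 0)
    (x : ℝ) (hx : 0 < x) :
    deriv (deriv (fun t => stolarskyExt α β t x)) x = (α + β - 3) / (12 * x) := by
  have hrep : (fun t => stolarskyExt α β t x) =ᶠ[𝓝 x]
      fun t => x * exp (stolarskyLogProfile α β (log t - log x)) :=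
    (eventually_gt_nhds hx).mono fun t ht =>
      stolarskyExt_eq_mul_exp_stolarskyLogProfile hα hβ hαβ.ne' hx ht
  have hℓ := contDiff_stolarskyLogProfile (n := 2) α β
  have hexp := iteratedDeriv_comp_two (g := exp) contDiff_exp.contDiffAt (hℓ.contDiffAt (x := 0))
  rw [Function.comp_def] at hexp
  rw [hrep.deriv.deriv_eq, show deriv (deriv _) x = deriv^[2] _ x from rfl,
    ← iteratedDeriv_eq_iterate, iteratedDeriv_const_mul_field,
    iteratedDeriv_two_comp_log_sub_log (h := fun v => exp (stolarskyLogProfile α β v)) hx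
      (contDiff_exp.comp hℓ).contDiffAt, hexp,
    _root_.deriv_exp (hℓ.differentiable two_ne_zero 0), Real.deriv_exp,
    iteratedDeriv_eq_iterate, iter_deriv_exp,
    stolarskyLogProfile_zero, deriv_stolarskyLogProfile_zero hαβ.ne',
    iteratedDeriv_two_stolarskyLogProfile_zero hαβ.ne', exp_zero]
  field_simp
  ring
end

section
/- The Scharfetter–Gummel mean satisfies ∂ₓ²S_{0,-1}(x,x) = -1/(3x) and the geometric mean satisfies ∂ₓ²S_{-1,1}(x,x) = -1/(4x), for all x > 0. -/
/-!
Both means are positively homogeneous of degree one, `S(t, x) = x S(t / x, 1)`, so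
`∂ₜ² S(t, x)` at `t = x` equals `m''(1) / x` for `m = S(·, 1)`. For the geometric mean
`m = √·` and `m''(1) = -1/4`. For the Scharfetter–Gummel mean `m u = u log u / (u - 1)` and
`m' u = (u - 1 - log u) / (u - 1)²` off `u = 1`; L'Hôpital's rule at `u = 1`, applied to the
slope of `m` and then to the slope of `m'`, gives `m'(1) = 1/2` and `m''(1) = -1/3`.
-/

/-- The Scharfetter--Gummel mean `S_{0,-1}`, extended continuously to the diagonal. -/
noncomputable def sgMean (x y : ℝ) : ℝ :=
  if x = y then x else x * y * (Real.log x - Real.log y) / (x - y)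

open Filter Topology Real

theorem deriv_comp_div_const (f : ℝ → ℝ) (c a : ℝ) :
    deriv (fun t => f (t / c)) a = deriv f (a / c) / c := by
  simpa [div_eq_inv_mul, mul_comm] using deriv_comp_mul_left (f := f) (c := c⁻¹) (x := a)

theorem deriv_deriv_const_mul_comp_div (f : ℝ → ℝ) (c a : ℝ) :
    deriv (deriv fun t => c * f (t / c)) a = deriv (deriv f) (a / c) / c := by
  simp only [deriv_const_mul_field', deriv_div_const, deriv_comp_div_const]
  rcases eq_or_ne c 0 with rfl | hc
  · simp
  · field_simp

theorem sgMean_eq_mul_sgMean_div {x : ℝ} (hx : x ≠ 0) (t : ℝ) :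
    sgMean t x = x * sgMean (t / x) 1 := by
  rcases eq_or_ne t 0 with rfl | ht
  · simp [sgMean]
  by_cases h : t = x
  · simp [sgMean, h, hx]
  · have h' : t / x ≠ 1 := by rwa [Ne, div_eq_one_iff_eq hx]
    have htx : t - x ≠ 0 := sub_ne_zero.mpr h
    have htx' : t / x - 1 ≠ 0 := sub_ne_zero.mpr h'
    simp only [sgMean, if_neg h, if_neg h', log_one, sub_zero, log_div ht hx]
    field_simp

theorem sqrt_mul_eq_mul_sqrt_div {x : ℝ} (hx : 0 ≤ x) (t : ℝ) :
    √(t * x) = x * √(t / x) := by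
  rcases hx.eq_or_lt with rfl | hx
  · simp
  rw [← sqrt_mul_self hx.le, ← sqrt_mul (mul_self_nonneg x), sqrt_mul_self hx.le]
  congr 1
  field_simp

theorem deriv_deriv_sqrt_one : deriv (deriv sqrt) 1 = -1 / 4 := by
  have h := iter_deriv_rpow_const (1 / 2) 1 2
  simp only [Function.iterate_succ, Function.iterate_zero, Function.comp_apply, id] at h
  rw [funext sqrt_eq_rpow, h]
  norm_num [descPochhammer_succ_right]

theorem HasDerivAt.lhopital_zero_nhds_of_apply_eq_zero {f g f' g' : ℝ → ℝ} {a l : ℝ}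
    (hf : ∀ᶠ t in 𝓝 a, HasDerivAt f (f' t) t) (hg : ∀ᶠ t in 𝓝 a, HasDerivAt g (g' t) t)
    (hfa : f a = 0) (hga : g a = 0) (hg' : ∀ᶠ t in 𝓝[≠] a, g' t ≠ 0)
    (hdiv : Tendsto (fun t => f' t / g' t) (𝓝[≠] a) (𝓝 l)) :
    Tendsto (fun t => f t / g t) (𝓝[≠] a) (𝓝 l) := by
  refine HasDerivAt.lhopital_zero_nhdsNE (eventually_nhdsWithin_of_eventually_nhds hf)
    (eventually_nhdsWithin_of_eventually_nhds hg) hg' ?_ ?_ hdiv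
  · simpa [hfa] using hf.self_of_nhds.continuousAt.continuousWithinAt.tendsto
  · simpa [hga] using hg.self_of_nhds.continuousAt.continuousWithinAt.tendsto

theorem sgMean_self (x : ℝ) : sgMean x x = x := if_pos rfl

theorem sgMean_one_of_ne {u : ℝ} (hu : u ≠ 1) : sgMean u 1 = u * log u / (u - 1) := by
  simp [sgMean, hu]

theorem hasDerivAt_sgMean_one_of_ne {u : ℝ} (hu : 0 < u) (hu1 : u ≠ 1) :
    HasDerivAt (sgMean · 1) ((u - 1 - log u) / (u - 1) ^ 2) u := by
  have h := ((hasDerivAt_id' u).mul (hasDerivAt_log hu.ne')).div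
    ((hasDerivAt_id' u).sub_const 1) (sub_ne_zero.2 hu1)
  refine (h.congr_of_eventuallyEq ?_).congr_deriv ?_
  · filter_upwards [eventually_ne_nhds hu1] with v hv using sgMean_one_of_ne hv
  · simp only [Pi.mul_apply, mul_inv_cancel₀ hu.ne']
    ring

theorem eventually_pos_and_ne_one : ∀ᶠ u in 𝓝[≠] (1 : ℝ), 0 < u ∧ u ≠ 1 :=
  (eventually_nhdsWithin_of_eventually_nhds (eventually_gt_nhds one_pos)).and self_mem_nhdsWithin

theorem hasDerivAt_sgMean_one_one : HasDerivAt (sgMean · 1) (1 / 2) 1 := by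
  rw [hasDerivAt_iff_tendsto_slope]
  have hlog : Tendsto (fun u => log u / (2 * (u - 1))) (𝓝[≠] 1) (𝓝 (1 / 2)) := by
    have h : Tendsto (fun u => slope log 1 u / 2) (𝓝[≠] 1) (𝓝 (1⁻¹ / 2)) :=
      (hasDerivAt_iff_tendsto_slope.mp (hasDerivAt_log one_ne_zero)).div_const 2
    rw [inv_one] at h
    refine h.congr' ?_
    filter_upwards [self_mem_nhdsWithin] with u hu
    rw [slope_def_field, log_one, sub_zero]
    field_simp
  have hslope := HasDerivAt.lhopital_zero_nhds_of_apply_eq_zero (f := fun u => u * log u - (u - 1))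
    (g := fun u => (u - 1) ^ 2) ?_ ?_ (by simp) (by simp) ?_ hlog
  · refine hslope.congr' ?_
    filter_upwards [self_mem_nhdsWithin] with u hu1
    have : u - 1 ≠ 0 := sub_ne_zero.2 hu1
    rw [slope_def_field, sgMean_one_of_ne hu1, sgMean_self]
    field_simp
  · filter_upwards [eventually_gt_nhds one_pos] with u hu
    refine (((hasDerivAt_id' u).mul (hasDerivAt_log hu.ne')).sub
      ((hasDerivAt_id' u).sub_const 1)).congr_deriv ?_
    rw [mul_inv_cancel₀ hu.ne']
    ring
  · filter_upwards with u
    refine (((hasDerivAt_id' u).sub_const 1).pow 2).congr_deriv ?_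
    simp
  · filter_upwards [self_mem_nhdsWithin] with u hu
    have : u - 1 ≠ 0 := sub_ne_zero.2 hu
    positivity

theorem hasDerivAt_deriv_sgMean_one : HasDerivAt (deriv (sgMean · 1)) (-1 / 3) 1 := by
  rw [hasDerivAt_iff_tendsto_slope]
  have hlim : Tendsto (fun u : ℝ => (1 - u⁻¹ - (u - 1)) / (3 * (u - 1) ^ 2)) (𝓝[≠] 1)
      (𝓝 (-1 / 3)) := by
    have hc : Tendsto (fun u : ℝ => -1 / (3 * u)) (𝓝[≠] 1) (𝓝 (-1 / (3 * 1))) :=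
      tendsto_nhdsWithin_of_tendsto_nhds
        ((continuousAt_const.div (continuousAt_const.mul continuousAt_id) (by norm_num)).tendsto)
    rw [mul_one] at hc
    refine hc.congr' ?_
    filter_upwards [eventually_pos_and_ne_one] with u ⟨hu, hu1⟩
    have : u - 1 ≠ 0 := sub_ne_zero.2 hu1
    field_simp
    ring
  have hslope := HasDerivAt.lhopital_zero_nhds_of_apply_eq_zero
    (f := fun u => u - 1 - log u - (u - 1) ^ 2 / 2) (g := fun u => (u - 1) ^ 3) ?_ ?_
    (by simp) (by simp) ?_ hlim
  · refine hslope.congr' ?_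
    filter_upwards [eventually_pos_and_ne_one] with u ⟨hu, hu1⟩
    have : u - 1 ≠ 0 := sub_ne_zero.2 hu1
    rw [slope_def_field, (hasDerivAt_sgMean_one_of_ne hu hu1).deriv,
      hasDerivAt_sgMean_one_one.deriv]
    field_simp
  · filter_upwards [eventually_gt_nhds one_pos] with u hu
    refine ((((hasDerivAt_id' u).sub_const 1).sub (hasDerivAt_log hu.ne')).sub
      ((((hasDerivAt_id' u).sub_const 1).pow 2).div_const 2)).congr_deriv ?_
    ring
  · filter_upwards with u
    refine (((hasDerivAt_id' u).sub_const 1).pow 3).congr_deriv ?_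
    simp
  · filter_upwards [self_mem_nhdsWithin] with u hu
    have : u - 1 ≠ 0 := sub_ne_zero.2 hu
    positivity

/-- The Scharfetter--Gummel mean satisfies `∂ₓ² S_{0,-1}(x,x) = -1/(3x)` and the geometric
mean satisfies `∂ₓ² S_{-1,1}(x,x) = -1/(4x)` for all `x > 0`. -/
theorem sg_and_geom_second_deriv_diagonal (x : ℝ) (hx : 0 < x) :
    deriv (deriv (fun t => sgMean t x)) x = -1 / (3 * x) ∧
    deriv (deriv (fun t => Real.sqrt (t * x))) x = -1 / (4 * x) := by
  have hsg : (fun t => sgMean t x) = fun t => x * (sgMean · 1) (t / x) :=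
    funext (sgMean_eq_mul_sgMean_div hx.ne')
  have hgeom : (fun t => √(t * x)) = fun t => x * sqrt (t / x) :=
    funext (sqrt_mul_eq_mul_sqrt_div hx.le)
  rw [hsg, hgeom, deriv_deriv_const_mul_comp_div (sgMean · 1), deriv_deriv_const_mul_comp_div,
    div_self hx.ne', hasDerivAt_deriv_sgMean_one.deriv, deriv_deriv_sqrt_one]
  constructor <;> field_simp
end

section
/- Consider the one-dimensional boundary value problem J = -κ(u' - q u) on [0,h] with constant J, constant q ≠ 0, constant κ > 0, and boundary values u(0) = u₀, u(h) = u_h. Then the flux is given by J = (κ/h)(u₀ B(-qh) - u_h B(qh)), where B(r) = r/(e^r - 1) is the Bernoulli function. -/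
/-! With the integrating factor `exp (-q x)` the equation says that
`(κ u(x) - J/q) exp (-q x)` has derivative zero, so it takes the same value at `0` and `h`:
`J (exp (-q h) - 1) = κ q (u_h exp (-q h) - u₀)`. Dividing by `exp (-q h) - 1 ≠ 0` and using
`exp (q h) = exp (-q h)⁻¹` gives the Bernoulli-function form of the flux. -/

open Real Set

lemma eq_of_hasDerivAt_zero_on_Icc {f : ℝ → ℝ} {a b : ℝ} (hab : a ≤ b)
    (hf : ∀ x ∈ Icc a b, HasDerivAt f 0 x) : f b = f a :=
  constant_of_has_deriv_right_zero (fun x hx => (hf x hx).continuousAt.continuousWithinAt)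
    (fun x hx => (hf x (Ico_subset_Icc_self hx)).hasDerivWithinAt) b (right_mem_Icc.2 hab)

lemma hasDerivAt_mul_exp_neg_mul {u : ℝ → ℝ} {u' x : ℝ} (q : ℝ) (hu : HasDerivAt u u' x) :
    HasDerivAt (fun y => u y * exp (-q * y)) ((u' - q * u x) * exp (-q * x)) x := by
  have hexp : HasDerivAt (fun y => exp (-q * y)) (exp (-q * x) * -q) x := by
    simpa using ((hasDerivAt_id x).const_mul (-q)).exp
  exact (hu.mul hexp).congr_deriv (by ring)

lemma flux_eq_of_mul_exp_neg_sub_one {κ q J u₀ uh h : ℝ} (hq : q ≠ 0) (hh : h ≠ 0)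
    (hJ : J * (exp (-q * h) - 1) = κ * q * (uh * exp (-q * h) - u₀)) :
    J = (κ / h) * (u₀ * ((-q * h) / (exp (-q * h) - 1)) -
          uh * ((q * h) / (exp (q * h) - 1))) := by
  have hqh : -q * h ≠ 0 := mul_ne_zero (neg_ne_zero.2 hq) hh
  have hinv : exp (q * h) = (exp (-q * h))⁻¹ := by rw [← exp_neg, neg_mul, neg_neg]
  have hE₁ : exp (-q * h) - 1 ≠ 0 := sub_ne_zero.2 fun h1 => hqh (exp_eq_one_iff _ |>.1 h1)
  have hE₀ : exp (-q * h) ≠ 0 := (exp_pos _).ne'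
  rw [hinv]
  generalize exp (-q * h) = E at *
  have hE₂ : 1 - E ≠ 0 := fun h1 => hE₁ (by linarith)
  have hE₃ : E⁻¹ - 1 = (1 - E) / E := by field_simp
  rw [hE₃]
  field_simp
  linear_combination (1 - E) * hJ

theorem scharfetter_gummel_flux_general (h κ q J u₀ uh : ℝ) (hh : 0 < h) (hq : q ≠ 0)
    (u u' : ℝ → ℝ)
    (hderiv : ∀ x ∈ Set.Icc (0 : ℝ) h, HasDerivAt u (u' x) x)
    (hODE : ∀ x ∈ Set.Icc (0 : ℝ) h, J = -κ * (u' x - q * u x))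
    (hu0 : u 0 = u₀) (huh : u h = uh) :
    J = (κ / h) * (u₀ * ((-q * h) / (Real.exp (-q * h) - 1)) -
          uh * ((q * h) / (Real.exp (q * h) - 1))) := by
  have hJq : q * (J / q) = J := mul_div_cancel₀ J hq
  have hconst : ∀ x ∈ Icc 0 h,
      HasDerivAt (fun y => (κ * u y - J / q) * exp (-q * y)) 0 x := by
    intro x hx
    convert hasDerivAt_mul_exp_neg_mul q (((hderiv x hx).const_mul κ).sub_const (J / q)) using 1
    linear_combination -exp (-q * x) * (hODE x hx + hJq)
  have hends := eq_of_hasDerivAt_zero_on_Icc hh.le hconst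
  simp only [huh, hu0, mul_zero, exp_zero, mul_one] at hends
  refine flux_eq_of_mul_exp_neg_sub_one hq hh.ne' ?_
  linear_combination -q * hends - (exp (-q * h) - 1) * hJq

/-- Scharfetter--Gummel flux formula: if `u` solves the two-point boundary value problem
`J = -κ (u' - q u)` on `[0,h]` with constant `J`, `q ≠ 0`, `κ > 0` and boundary values
`u(0) = u₀`, `u(h) = u_h`, then `J = (κ/h)(u₀ B(-qh) - u_h B(qh))` with the Bernoulli
function `B(r) = r/(e^r - 1)`. -/
theorem scharfetter_gummel_flux (h κ q J u₀ uh : ℝ) (hh : 0 < h) (hκ : 0 < κ) (hq : q ≠ 0)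
    (u u' : ℝ → ℝ)
    (hderiv : ∀ x ∈ Set.Icc (0 : ℝ) h, HasDerivAt u (u' x) x)
    (hODE : ∀ x ∈ Set.Icc (0 : ℝ) h, J = -κ * (u' x - q * u x))
    (hu0 : u 0 = u₀) (huh : u h = uh) :
    J = (κ / h) * (u₀ * ((-q * h) / (Real.exp (-q * h) - 1)) -
          uh * ((q * h) / (Real.exp (q * h) - 1))) :=
  scharfetter_gummel_flux_general h κ q J u₀ uh hh hq u u' hderiv hODE hu0 huh
end

section
/- For positive reals π_i, π_j, writing π_m = (π_i + π_j)/2, the weighted Stolarsky mean admits the expansion S_{α,β}(π_i, π_j) = π_m + ((α+β)/3 - 1)/(8π_m) · (π_i - π_j)² + O((π_i - π_j)³) as π_j → π_i. In particular, for two Stolarsky means with α + β = α̃ + β̃, the difference S_{α,β}(π_i,π_j) - S_{α̃,β̃}(π_i,π_j) = O((π_i - π_j)³). -/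
/-!
By homogeneity `S(x, y) = x · S(1, y / x)`, so it suffices to expand `u ↦ S(1, 1 + u)` to second
order at `0`. Off the diagonal `S(1, 1 + u) = exp ((log G_α u - log G_β u) / (α - β))`, where
`G_γ u = ((1 + u) ^ γ - 1) / (γ u)`. The binomial series gives
`G_γ u = 1 + (γ - 1) u / 2 + (γ - 1) (γ - 2) u² / 6 + O(u³)`, and second-order expansions compose
like 2-jets, so `S(1, 1 + u) = 1 + u / 2 + (α + β - 3) u² / 24 + O(u³)`. Substituting
`u = (y - x) / x`, what separates `x · (1 + u / 2 + (α + β - 3) u² / 24)` from the stated quadratic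
is `-(α + β - 3) (x - y)³ / (24 x (x + y))`. The second claim follows by subtracting two such
expansions.
-/

open Filter Asymptotics

open Topology Real

theorem isBigO_mul_of_tendsto {α : Type*} {l : Filter α} {w g : α → ℝ} {c : ℝ}
    (hg : Tendsto g l (𝓝 c)) : (fun a => w a * g a) =O[l] w := by
  simpa using (isBigO_refl w l).mul (hg.isBigO_one ℝ)

def HasQuadraticExpansion (l : Filter ℝ) (f : ℝ → ℝ) (c₀ c₁ c₂ : ℝ) : Prop :=
  (fun u => f u - (c₀ + c₁ * u + c₂ * u ^ 2)) =O[l] fun u => u ^ 3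

theorem hasQuadraticExpansion_exp : HasQuadraticExpansion (𝓝 0) exp 1 1 (1 / 2) := by
  refine IsBigO.of_bound (2 / 9) ?_
  filter_upwards [Metric.closedBall_mem_nhds (0 : ℝ) one_pos] with v hv
  have h := Real.exp_bound (n := 3) (by simpa using hv) (by norm_num)
  have e : exp v - (1 + 1 * v + 1 / 2 * v ^ 2) =
      exp v - ∑ i ∈ Finset.range 3, v ^ i / i.factorial := by
    norm_num [Finset.sum_range_succ]
    ring
  rw [Real.norm_eq_abs, Real.norm_eq_abs, e, abs_pow]
  exact h.trans_eq (by norm_num [Nat.factorial]; ring)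

theorem hasQuadraticExpansion_log_one_add :
    HasQuadraticExpansion (𝓝 0) (fun v => log (1 + v)) 0 1 (-1 / 2) := by
  refine IsBigO.of_bound 2 ?_
  filter_upwards [Metric.closedBall_mem_nhds (0 : ℝ) one_half_pos] with v hv
  have hv : |v| ≤ 1 / 2 := by simpa using hv
  have h := Real.abs_log_sub_add_sum_range_le (x := -v) (by rw [abs_neg]; linarith) 2
  have e : log (1 + v) - (0 + 1 * v + -1 / 2 * v ^ 2) =
      ∑ i ∈ Finset.range 2, (-v) ^ (i + 1) / (i + 1) + log (1 - -v) := by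
    norm_num [Finset.sum_range_succ]
    ring
  rw [Real.norm_eq_abs, Real.norm_eq_abs, e, abs_pow]
  calc _ ≤ |-v| ^ (2 + 1) / (1 - |-v|) := h
    _ = |v| ^ 3 / (1 - |v|) := by rw [abs_neg]
    _ ≤ 2 * |v| ^ 3 := by
      rw [div_le_iff₀ (by linarith)]
      nlinarith [pow_nonneg (abs_nonneg v) 3]

namespace HasQuadraticExpansion

variable {l : Filter ℝ} {f g : ℝ → ℝ} {a₀ a₁ a₂ b₀ b₁ b₂ : ℝ}

theorem congr' (hf : HasQuadraticExpansion l f a₀ a₁ a₂) (hfg : f =ᶠ[l] g) :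
    HasQuadraticExpansion l g a₀ a₁ a₂ :=
  IsBigO.congr' hf (hfg.mono fun u hu => by simp only [hu]) EventuallyEq.rfl

theorem sub (hf : HasQuadraticExpansion l f a₀ a₁ a₂)
    (hg : HasQuadraticExpansion l g b₀ b₁ b₂) :
    HasQuadraticExpansion l (fun u => f u - g u) (a₀ - b₀) (a₁ - b₁) (a₂ - b₂) :=
  (IsBigO.sub hf hg).congr_left fun u => by ring

theorem div_const (hf : HasQuadraticExpansion l f a₀ a₁ a₂) (c : ℝ) :
    HasQuadraticExpansion l (fun u => f u / c) (a₀ / c) (a₁ / c) (a₂ / c) :=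
  (IsBigO.const_mul_left hf c⁻¹).congr_left fun u => by ring

theorem of_nhdsNE (hf : HasQuadraticExpansion (𝓝[≠] 0) f a₀ a₁ a₂) (h₀ : f 0 = a₀) :
    HasQuadraticExpansion (𝓝 0) f a₀ a₁ a₂ := by
  rw [HasQuadraticExpansion, ← nhdsNE_sup_pure]
  exact IsBigO.sup hf (isBigO_pure.2 fun _ => by simp [h₀])

theorem isBigO_sub_const (hl : l ≤ 𝓝 0) (hf : HasQuadraticExpansion l f a₀ a₁ a₂) :
    (fun u => f u - a₀) =O[l] id := by
  have hcubic : (fun u : ℝ => u ^ 3) =O[l] id :=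
    ((isLittleO_pow_id (by norm_num)).isBigO).mono hl
  have hlin : (fun u : ℝ => u * (a₁ + a₂ * u)) =O[l] id :=
    isBigO_mul_of_tendsto
      (((by fun_prop : Continuous fun u : ℝ => a₁ + a₂ * u).tendsto 0).mono_left hl)
  exact ((IsBigO.trans hf hcubic).add hlin).congr_left fun u => by ring

theorem tendsto (hl : l ≤ 𝓝 0) (hf : HasQuadraticExpansion l f a₀ a₁ a₂) :
    Tendsto f l (𝓝 a₀) := by
  have := (hf.isBigO_sub_const hl).trans_tendsto (tendsto_id.mono_left hl)
  simpa using this.add_const a₀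

theorem comp (hl : l ≤ 𝓝 0) {φ : ℝ → ℝ} {c₀ c₁ c₂ : ℝ}
    (hφ : HasQuadraticExpansion (𝓝 0) φ c₀ c₁ c₂) (hf : HasQuadraticExpansion l f 0 a₁ a₂) :
    HasQuadraticExpansion l (fun u => φ (f u)) c₀ (c₁ * a₁) (c₁ * a₂ + c₂ * a₁ ^ 2) := by
  set q : ℝ → ℝ := fun u => a₁ * u + a₂ * u ^ 2
  have hfq : (fun u => f u - q u) =O[l] fun u => u ^ 3 :=
    IsBigO.congr_left hf fun u => by ring
  have hf₀ : Tendsto f l (𝓝 0) := hf.tendsto hl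
  have hq₀ : Tendsto q l (𝓝 0) := by
    simpa [q] using ((show Continuous q by fun_prop).tendsto 0).mono_left hl
  have hfO : f =O[l] id := by simpa using hf.isBigO_sub_const hl
  have hφf : (fun u => φ (f u) - (c₀ + c₁ * f u + c₂ * f u ^ 2)) =O[l] fun u => u ^ 3 :=
    (IsBigO.comp_tendsto hφ hf₀).trans (hfO.pow 3)
  have hsq : (fun u => f u ^ 2 - q u ^ 2) =O[l] fun u => u ^ 3 :=
    (isBigO_mul_of_tendsto (hf₀.add hq₀)).trans hfq |>.congr_left fun u => by ring
  have hq : (fun u => q u ^ 2 - a₁ ^ 2 * u ^ 2) =O[l] fun u => u ^ 3 :=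
    (isBigO_mul_of_tendsto (g := fun u => 2 * a₁ * a₂ + a₂ ^ 2 * u)
      (((by fun_prop : Continuous _).tendsto 0).mono_left hl)).congr_left fun u => by ring
  exact (((hφf.add (hfq.const_mul_left c₁)).add (hsq.const_mul_left c₂)).add
    (hq.const_mul_left c₂)).congr_left fun u => by ring

theorem exp (hl : l ≤ 𝓝 0) (hf : HasQuadraticExpansion l f 0 a₁ a₂) :
    HasQuadraticExpansion l (fun u => Real.exp (f u)) 1 a₁ (a₂ + a₁ ^ 2 / 2) := by
  convert hasQuadraticExpansion_exp.comp hl hf using 1 <;> ring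

theorem log (hl : l ≤ 𝓝 0) (hf : HasQuadraticExpansion l f 1 a₁ a₂) :
    HasQuadraticExpansion l (fun u => Real.log (f u)) 0 a₁ (a₂ - a₁ ^ 2 / 2) := by
  have hf₁ : HasQuadraticExpansion l (fun u => f u - 1) 0 a₁ a₂ :=
    IsBigO.congr_left hf fun u => by ring
  convert hasQuadraticExpansion_log_one_add.comp hl hf₁ using 1
  · simp
  · ring
  · ring

end HasQuadraticExpansion

theorem one_add_rpow_sub_cubic_isBigO (γ : ℝ) :
    (fun u : ℝ => (1 + u) ^ γ -
        (1 + γ * u + γ * (γ - 1) / 2 * u ^ 2 + γ * (γ - 1) * (γ - 2) / 6 * u ^ 3))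
      =O[𝓝 0] fun u => u ^ 4 := by
  have hsum (u : ℝ) : (binomialSeries ℝ γ).partialSum 4 u =
      1 + γ * u + γ * (γ - 1) / 2 * u ^ 2 + γ * (γ - 1) * (γ - 2) / 6 * u ^ 3 := by
    simp only [FormalMultilinearSeries.partialSum, Finset.sum_range_succ, Finset.sum_range_zero,
      FormalMultilinearSeries.apply_eq_prod_smul_coeff, binomialSeries,
      FormalMultilinearSeries.coeff_ofScalars, Ring.choose_eq_smul, ← Polynomial.aeval_eq_smeval,
      descPochhammer_succ_right, descPochhammer_zero, map_mul, map_sub, map_one,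
      Polynomial.aeval_X, map_natCast, Finset.prod_const, Finset.card_univ, Fintype.card_fin,
      smul_eq_mul, Nat.factorial]
    push_cast
    ring
  have h := (one_add_rpow_hasFPowerSeriesAt_zero (a := γ)).isBigO_sub_partialSum_pow 4
  simp only [zero_add, Real.norm_eq_abs, pow_abs, hsum] at h
  exact h.of_abs_right

noncomputable def rpowDiffQuot (γ u : ℝ) : ℝ := ((1 + u) ^ γ - 1) / (γ * u)

theorem hasQuadraticExpansion_rpowDiffQuot {γ : ℝ} (hγ : γ ≠ 0) :
    HasQuadraticExpansion (𝓝[≠] 0) (rpowDiffQuot γ) 1 ((γ - 1) / 2)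
      ((γ - 1) * (γ - 2) / 6) := by
  have h := (((one_add_rpow_sub_cubic_isBigO γ).mono nhdsWithin_le_nhds).mul
    (isBigO_refl (fun u : ℝ => u⁻¹) (𝓝[≠] 0))).const_mul_left γ⁻¹
  refine h.congr' ?_ ?_ <;> filter_upwards [self_mem_nhdsWithin] with u (hu : u ≠ 0)
  · simp only [rpowDiffQuot]
    field_simp
    ring
  · field_simp

theorem Real.mul_rpow_of_pos_left {c : ℝ} (hc : 0 < c) (b z : ℝ) :
    (c * b) ^ z = c ^ z * b ^ z := by
  rcases le_or_gt 0 b with hb | hb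
  · exact mul_rpow hc.le hb
  · rw [rpow_def_of_neg (mul_neg_of_pos_of_neg hc hb), rpow_def_of_neg hb, rpow_def_of_pos hc,
      log_mul hc.ne' hb.ne, add_mul, exp_add]
    ring

theorem stolarskyExt_mul {α β t x y : ℝ} (hαβ : α ≠ β) (ht : 0 < t) (hx : 0 ≤ x)
    (hy : 0 ≤ y) :
    stolarskyExt α β (t * x) (t * y) = t * stolarskyExt α β x y := by
  by_cases hxy : x = y
  · simp [stolarskyExt, hxy]
  have htxy : t * x ≠ t * y := by simpa [ht.ne'] using hxy
  have hbase : β * ((t * x) ^ α - (t * y) ^ α) / (α * ((t * x) ^ β - (t * y) ^ β)) =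
      t ^ (α - β) * (β * (x ^ α - y ^ α) / (α * (x ^ β - y ^ β))) := by
    rw [mul_rpow ht.le hx, mul_rpow ht.le hx, mul_rpow ht.le hy, mul_rpow ht.le hy, ← mul_sub,
      ← mul_sub, rpow_sub ht]
    generalize x ^ α - y ^ α = A
    generalize x ^ β - y ^ β = B
    ring
  rw [stolarskyExt, stolarskyExt, if_neg htxy, if_neg hxy, hbase,
    mul_rpow_of_pos_left (rpow_pos_of_pos ht _), ← rpow_mul ht.le,
    mul_one_div_cancel (sub_ne_zero.2 hαβ), rpow_one]

theorem stolarskyExt_one_one_add (α β : ℝ) {u : ℝ} (hu : u ≠ 0) :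
    stolarskyExt α β 1 (1 + u) = (rpowDiffQuot α u / rpowDiffQuot β u) ^ (1 / (α - β)) := by
  rw [stolarskyExt, if_neg (by simpa using hu)]
  congr 1
  simp only [rpowDiffQuot, one_rpow, div_div_div_eq]
  rw [mul_comm α u, mul_assoc, ← mul_assoc _ β u, mul_comm u, mul_div_mul_right _ _ hu,
    ← neg_sub _ (1 : ℝ), ← neg_sub _ (1 : ℝ), mul_neg, mul_neg, neg_div_neg_eq, mul_comm β]

theorem hasQuadraticExpansion_stolarskyExt_one {α β : ℝ} (hαβ : α ≠ β) (hα : α ≠ 0)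
    (hβ : β ≠ 0) :
    HasQuadraticExpansion (𝓝 0) (fun u => stolarskyExt α β 1 (1 + u)) 1 (1 / 2)
      ((α + β - 3) / 24) := by
  have hl : 𝓝[≠] (0 : ℝ) ≤ 𝓝 0 := nhdsWithin_le_nhds
  have hlog : HasQuadraticExpansion (𝓝[≠] 0)
      (fun u => (log (rpowDiffQuot α u) - log (rpowDiffQuot β u)) / (α - β))
      0 (1 / 2) ((α + β - 6) / 24) := by
    convert ((((hasQuadraticExpansion_rpowDiffQuot hα).log hl).sub
      ((hasQuadraticExpansion_rpowDiffQuot hβ).log hl)).div_const (α - β)) using 1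
    · simp
    · field_simp; ring
    · field_simp; ring
  have hpos : ∀ {γ : ℝ}, γ ≠ 0 → ∀ᶠ u in 𝓝[≠] (0 : ℝ), 0 < rpowDiffQuot γ u := fun hγ =>
    ((hasQuadraticExpansion_rpowDiffQuot hγ).tendsto hl).eventually (eventually_gt_nhds one_pos)
  refine HasQuadraticExpansion.of_nhdsNE ?_ (by simp [stolarskyExt])
  convert (hlog.exp hl).congr' ?_ using 1
  · ring
  filter_upwards [hpos hα, hpos hβ, self_mem_nhdsWithin] with u hGα hGβ (hu : u ≠ 0)
  rw [stolarskyExt_one_one_add α β hu, rpow_def_of_pos (div_pos hGα hGβ),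
    log_div hGα.ne' hGβ.ne']
  ring_nf

theorem stolarskyExt_sub_quadratic_isBigO {α β : ℝ} (hαβ : α ≠ β) (hα : α ≠ 0) (hβ : β ≠ 0)
    {x : ℝ} (hx : 0 < x) :
    (fun y => stolarskyExt α β x y -
        ((x + y) / 2 + ((α + β) / 3 - 1) / (8 * ((x + y) / 2)) * (x - y) ^ 2))
      =O[𝓝 x] fun y => (x - y) ^ 3 := by
  set c := (α + β - 3) / 24
  have hψ : Tendsto (fun y => y / x - 1) (𝓝 x) (𝓝 0) := by
    simpa [hx.ne'] using (by fun_prop : Continuous fun y : ℝ => y / x - 1).tendsto x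
  have hψ₃ : (fun y => (y / x - 1) ^ 3) =O[𝓝 x] fun y => (x - y) ^ 3 :=
    (isBigO_const_mul_self (-(x ^ 3)⁻¹) _ _).congr_left fun y => by field_simp; ring
  have hS := (((hasQuadraticExpansion_stolarskyExt_one hαβ hα hβ).comp_tendsto hψ).trans
    hψ₃).const_mul_left x
  have hT : (fun y => x * (1 + 1 / 2 * (y / x - 1) + c * (y / x - 1) ^ 2) -
      ((x + y) / 2 + ((α + β) / 3 - 1) / (8 * ((x + y) / 2)) * (x - y) ^ 2))
      =O[𝓝 x] fun y => (x - y) ^ 3 := by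
    refine (isBigO_mul_of_tendsto (g := fun y => -c / (x * (x + y)))
      (tendsto_const_nhds.div ((by fun_prop : Continuous fun y => x * (x + y)).tendsto x)
        (by positivity))).congr' ?_ EventuallyEq.rfl
    filter_upwards [eventually_gt_nhds hx] with y hy
    have : x + y ≠ 0 := by positivity
    field_simp
    ring
  refine (hS.add hT).congr' ?_ EventuallyEq.rfl
  filter_upwards [eventually_gt_nhds hx] with y hy
  have hhom : stolarskyExt α β x y = x * stolarskyExt α β 1 (1 + (y / x - 1)) := by
    rw [add_sub_cancel, ← stolarskyExt_mul hαβ hx zero_le_one (div_pos hy hx).le, mul_one,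
      mul_div_cancel₀ _ hx.ne']
  simp only [Function.comp_apply, hhom]
  ring

/-- Second-order expansion of the weighted Stolarsky mean about the diagonal:
`S_{α,β}(x,y) = (x+y)/2 + ((α+β)/3 - 1)/(8 (x+y)/2) (x-y)² + O((x-y)³)` as `y → x`,
and consequently two Stolarsky means with the same `α + β` differ by `O((x-y)³)`. -/
theorem stolarsky_expansion_near_diagonal (α β α' β' x : ℝ) (hx : 0 < x)
    (hαβ : α ≠ β) (hα : α ≠ 0) (hβ : β ≠ 0)
    (hαβ' : α' ≠ β') (hα' : α' ≠ 0) (hβ' : β' ≠ 0) :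
    (fun y => stolarskyExt α β x y -
        ((x + y) / 2 + ((α + β) / 3 - 1) / (8 * ((x + y) / 2)) * (x - y) ^ 2))
      =O[nhds x] (fun y => (x - y) ^ 3) ∧
    (α + β = α' + β' →
      (fun y => stolarskyExt α β x y - stolarskyExt α' β' x y) =O[nhds x]
        (fun y => (x - y) ^ 3)) := by
  refine ⟨stolarskyExt_sub_quadratic_isBigO hαβ hα hβ hx, fun hsum => ?_⟩
  refine (IsBigO.sub (stolarskyExt_sub_quadratic_isBigO hαβ hα hβ hx)
    (stolarskyExt_sub_quadratic_isBigO hαβ' hα' hβ' hx)).congr_left fun y => ?_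
  rw [hsum]
  ring
end
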